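/- Let N ≥ 1, 0 < 2s < N, 1 < p ≤ ∞ with 2s − N/p = 1. Let g ∈ L^p(B_∞) be supported in an open ball B_∞, and define ψ_H = k_{2s} * g. Then ψ_H is 'almost Lipschitz': there is C such that |ψ_H(x₁) − ψ_H(x₂)| ≤ C |x₁−x₂| log(|x₁−x₂|^{−1}) for all x₁, x₂ in any fixed bounded set with |x₁−x₂| ≤ 1/2. -/

import Mathlib

/-!
Write the kernel as `D ‖x‖ ^ a` with `a = 2s - N`. For the conjugate exponent `q` of `p` the
endpoint relation reads `a = 1 - N / q`, so by Hölder it suffices to bound, over a large ball,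
the `L^q` norm of `Δ y = ‖x₁ - y‖ ^ a - ‖x₂ - y‖ ^ a` by `C h log h⁻¹`, where `h = ‖x₁ - x₂‖`.
In polar coordinates `∫_{‖y‖ ≤ r} ‖y‖ ^ (a q) = σ r ^ q / q`, with `σ` the area of the unit
sphere, so on the ball of radius `2h` around `x₁` each term of `Δ` has `L^q` norm `O(h)`.
Outside that ball the mean value theorem gives `|Δ y| ≤ C h ‖x₁ - y‖ ^ (a - 1)`, and
`(a - 1) q = -N` makes the integral of the `q`-th power over the annulus `2h ≤ ‖x₁ - y‖ ≤ 2M`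
equal to `σ log (M / h)`: this is the logarithm.
-/

open MeasureTheory
open scoped ENNReal

/-- The Riesz kernel `k_{2s}(x) = D_{N,s}|x|^{2s−N}` for `2s < N`. -/
noncomputable def rieszKernel (N : ℕ) (s : ℝ) (x : EuclideanSpace ℝ (Fin N)) : ℝ :=
  (Real.pi ^ (-(N : ℝ) / 2) * 2 ^ (-(2 * s)) *
    Real.Gamma (((N : ℝ) - 2 * s) / 2) / Real.Gamma s) * ‖x‖ ^ (2 * s - (N : ℝ))

open Set Metric Module

theorem abs_rpow_sub_rpow_le {a r₁ r₂ : ℝ} (ha : a ≤ 1) (hr₁ : 0 < r₁)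
    (h : |r₂ - r₁| ≤ r₁ / 2) :
    |r₁ ^ a - r₂ ^ a| ≤ |a| * (r₁ / 2) ^ (a - 1) * |r₂ - r₁| := by
  have hr₂ : r₁ / 2 ≤ r₂ := by linarith [(abs_le.1 h).1]
  have hderiv : ∀ t ∈ Ici (r₁ / 2),
      HasDerivWithinAt (· ^ a) (a * t ^ (a - 1)) (Ici (r₁ / 2)) t := fun t ht ↦
    (Real.hasDerivAt_rpow_const (.inl (by linarith [mem_Ici.1 ht] : 0 < t).ne')).hasDerivWithinAt
  have hbound : ∀ t ∈ Ici (r₁ / 2), ‖a * t ^ (a - 1)‖ ≤ |a| * (r₁ / 2) ^ (a - 1) := by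
    intro t ht
    have ht₀ : 0 ≤ t := by linarith [mem_Ici.1 ht]
    rw [Real.norm_eq_abs, abs_mul, abs_of_nonneg (Real.rpow_nonneg ht₀ _)]
    exact mul_le_mul_of_nonneg_left
      (Real.rpow_le_rpow_of_nonpos (by positivity) ht (by linarith)) (abs_nonneg a)
  simpa [Real.norm_eq_abs, abs_sub_comm] using
    (convex_Ici _).norm_image_sub_le_of_norm_hasDerivWithin_le hderiv hbound
      (x := r₁) (mem_Ici.2 (by linarith)) (mem_Ici.2 hr₂)

theorem abs_norm_sub_rpow_sub_le {E : Type*} [NormedAddCommGroup E] {a : ℝ} (ha : a ≤ 1)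
    {x₁ x₂ y : E} (hy : 2 * ‖x₁ - x₂‖ ≤ ‖x₁ - y‖) (hx : x₁ ≠ x₂) :
    |‖x₁ - y‖ ^ a - ‖x₂ - y‖ ^ a| ≤
      |a| * 2 ^ (1 - a) * ‖x₁ - x₂‖ * ‖x₁ - y‖ ^ (a - 1) := by
  have hr₁ : 0 < ‖x₁ - y‖ := (mul_pos two_pos (norm_pos_iff.2 (sub_ne_zero.2 hx))).trans_le hy
  have hr : |‖x₂ - y‖ - ‖x₁ - y‖| ≤ ‖x₁ - x₂‖ := by
    simpa [norm_sub_rev x₁ x₂] using abs_norm_sub_norm_le (x₂ - y) (x₁ - y)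
  calc _ ≤ |a| * (‖x₁ - y‖ / 2) ^ (a - 1) * |‖x₂ - y‖ - ‖x₁ - y‖| :=
        abs_rpow_sub_rpow_le ha hr₁ (by linarith)
    _ ≤ |a| * (‖x₁ - y‖ / 2) ^ (a - 1) * ‖x₁ - x₂‖ := by gcongr
    _ = _ := by
        rw [Real.div_rpow hr₁.le zero_le_two, div_eq_mul_inv, ← Real.rpow_neg zero_le_two,
          neg_sub]
        ring

theorem rpow_le_one_add_self {x r : ℝ} (hx : 0 ≤ x) (hr₀ : 0 ≤ r) (hr₁ : r ≤ 1) :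
    x ^ r ≤ 1 + x := by
  have := rpow_one_add_le_one_add_mul_self (s := x - 1) (by linarith) hr₀ hr₁
  rw [add_sub_cancel] at this
  nlinarith

theorem one_add_log_div_le_mul_log_inv {M h : ℝ} (hM : 1 ≤ M) (hh₀ : 0 < h) (hh : h ≤ 1 / 2) :
    1 + Real.log (M / h) ≤ ((1 + Real.log M) / Real.log 2 + 1) * Real.log h⁻¹ := by
  have hlog2 : 0 < Real.log 2 := Real.log_pos one_lt_two
  have hL : Real.log 2 ≤ Real.log h⁻¹ :=
    Real.log_le_log two_pos (by rw [le_inv_comm₀ two_pos hh₀]; linarith)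
  have hlogM : 0 ≤ Real.log M := Real.log_nonneg hM
  rw [div_eq_mul_inv, Real.log_mul (by positivity) (by positivity), add_mul, one_mul,
    div_mul_eq_mul_div, ← add_assoc]
  gcongr
  rw [le_div_iff₀ hlog2]
  exact mul_le_mul_of_nonneg_left hL (by positivity)

theorem add_mul_rpow_log_div_le_mul_log_inv {c₁ c₂ σ q M h : ℝ} (hc₁ : 0 ≤ c₁) (hc₂ : 0 ≤ c₂)
    (hσ : 0 ≤ σ) (hq : 1 ≤ q) (hM : 1 ≤ M) (hh₀ : 0 < h) (hh : h ≤ 1 / 2) :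
    c₁ * h + c₂ * h * (σ * Real.log (M / h)) ^ (1 / q) ≤
      (c₁ + c₂ * (1 + σ)) * ((1 + Real.log M) / Real.log 2 + 1) * h * Real.log h⁻¹ := by
  have hlog : 0 ≤ Real.log (M / h) := Real.log_nonneg (by rw [le_div_iff₀ hh₀]; linarith)
  have hroot : (σ * Real.log (M / h)) ^ (1 / q) ≤ (1 + σ) * (1 + Real.log (M / h)) :=
    (rpow_le_one_add_self (by positivity) (by positivity)
      (by rw [div_le_one (by linarith)]; exact hq)).trans (by nlinarith)
  have hfar : c₂ * h * (σ * Real.log (M / h)) ^ (1 / q) ≤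
      c₂ * h * ((1 + σ) * (1 + Real.log (M / h))) := by gcongr
  have hnear : c₁ * h ≤ c₁ * h * (1 + Real.log (M / h)) :=
    le_mul_of_one_le_right (by positivity) (by linarith)
  calc _ ≤ (c₁ + c₂ * (1 + σ)) * h * (1 + Real.log (M / h)) := by linarith
    _ ≤ (c₁ + c₂ * (1 + σ)) * h * (((1 + Real.log M) / Real.log 2 + 1) * Real.log h⁻¹) := by
        gcongr
        exact one_add_log_div_le_mul_log_inv hM hh₀ hh
    _ = _ := by ring

theorem closedBall_subset_closedBall_union_annulus {E : Type*} [NormedAddCommGroup E]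
    {x : E} {M : ℝ} (hx : x ∈ closedBall 0 M) (r : ℝ) :
    closedBall 0 M ⊆ closedBall x r ∪ {y | ‖x - y‖ ∈ Icc r (2 * M)} := by
  intro y hy
  rcases le_or_gt ‖x - y‖ r with hy' | hy'
  · exact .inl (by rwa [mem_closedBall, dist_eq_norm'])
  · refine .inr ⟨hy'.le, ?_⟩
    rw [mem_closedBall_zero_iff] at hx hy
    linarith [norm_sub_le x y]

theorem eLpNorm_restrict_union_le {α ε : Type*} [MeasurableSpace α] [ENorm ε] {μ : Measure α}
    (f : α → ε) {p : ℝ≥0∞} (hp : 1 ≤ p) (hp_top : p ≠ ∞) (s t : Set α) :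
    eLpNorm f p (μ.restrict (s ∪ t)) ≤
      eLpNorm f p (μ.restrict s) + eLpNorm f p (μ.restrict t) := by
  have hp₁ : 1 ≤ p.toReal := by simpa using ENNReal.toReal_mono hp_top hp
  simp only [eLpNorm_eq_lintegral_rpow_enorm_toReal (zero_lt_one.trans_le hp).ne' hp_top]
  calc _ ≤ (∫⁻ x, ‖f x‖ₑ ^ p.toReal ∂μ.restrict s +
          ∫⁻ x, ‖f x‖ₑ ^ p.toReal ∂μ.restrict t) ^ (1 / p.toReal) := by
        rw [← lintegral_add_measure]
        gcongr
        exact Measure.restrict_union_le _ _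
    _ ≤ _ := ENNReal.rpow_add_le_add_rpow _ _ (by positivity)
        (by rw [div_le_one (by positivity)]; exact hp₁)

theorem exists_holderConjugate_ofReal {p : ℝ≥0∞} (hp : 1 < p) :
    ∃ q : ℝ, p.HolderConjugate (.ofReal q) ∧ (1 / p).toReal + 1 / q = 1 := by
  have hpq := ENNReal.HolderConjugate.conjExponent hp.le
  have hq_top : p.conjExponent ≠ ∞ :=
    ((ENNReal.HolderConjugate.lt_top_iff_one_lt p.conjExponent p).2 hp).ne
  refine ⟨p.conjExponent.toReal, by rwa [ENNReal.ofReal_toReal hq_top], ?_⟩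
  rw [one_div, one_div, ← ENNReal.toReal_inv, ← ENNReal.toReal_add
    (ENNReal.inv_ne_top.2 (zero_lt_one.trans hp).ne')
    (ENNReal.inv_ne_top.2 (ENNReal.HolderConjugate.ne_zero p.conjExponent p)),
    ENNReal.HolderConjugate.inv_add_inv_eq_one, ENNReal.toReal_one]

theorem enorm_integral_mul_sub_integral_mul_le {α : Type*} [MeasurableSpace α] {μ : Measure α}
    {p q : ℝ≥0∞} [p.HolderConjugate q] {k₁ k₂ g : α → ℝ} {s : Set α}
    (hk₁ : MemLp k₁ q (μ.restrict s)) (hk₂ : MemLp k₂ q (μ.restrict s)) (hg : MemLp g p μ)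
    (hgs : Function.support g ⊆ s) :
    ‖∫ x, k₁ x * g x ∂μ - ∫ x, k₂ x * g x ∂μ‖ₑ ≤
      eLpNorm (k₁ - k₂) q (μ.restrict s) * eLpNorm g p μ := by
  have hzero (k : α → ℝ) (x : α) (hx : x ∉ s) : k x * g x = 0 := by
    rw [Function.notMem_support.1 (fun h ↦ hx (hgs h)), mul_zero]
  rw [← setIntegral_eq_integral_of_forall_compl_eq_zero (hzero k₁),
    ← setIntegral_eq_integral_of_forall_compl_eq_zero (hzero k₂),
    ← integral_sub (f := fun x ↦ k₁ x * g x) (g := fun x ↦ k₂ x * g x)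
      (hk₁.integrable_mul (hg.restrict s)) (hk₂.integrable_mul (hg.restrict s))]
  calc _ ≤ eLpNorm ((k₁ - k₂) • g) 1 (μ.restrict s) := by
        rw [eLpNorm_one_eq_lintegral_enorm]
        refine (enorm_integral_le_lintegral_enorm _).trans_eq (lintegral_congr fun x ↦ ?_)
        simp [sub_mul]
    _ ≤ eLpNorm (k₁ - k₂) q (μ.restrict s) * eLpNorm g p (μ.restrict s) :=
        eLpNorm_smul_le_mul_eLpNorm hg.1.restrict (hk₁.1.sub hk₂.1)
    _ ≤ _ := by gcongr; exact Measure.restrict_le_self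

section HaarMeasure

variable {E : Type*} [NormedAddCommGroup E] [NormedSpace ℝ E] [FiniteDimensional ℝ E]
  [MeasurableSpace E] [BorelSpace E] [Nontrivial E] (μ : Measure E) [μ.IsAddHaarMeasure]

theorem lintegral_fun_norm_addHaar (f : ℝ → ℝ≥0∞) (hf : Measurable f) :
    ∫⁻ x, f ‖x‖ ∂μ =
      μ.toSphere univ * ∫⁻ r in Ioi (0 : ℝ), ENNReal.ofReal (r ^ (finrank ℝ E - 1)) * f r := by
  have hf' : Measurable fun z : sphere (0 : E) 1 × Ioi (0 : ℝ) ↦ f z.2 :=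
    hf.comp (measurable_subtype_coe.comp measurable_snd)
  calc ∫⁻ x, f ‖x‖ ∂μ = ∫⁻ x : ({(0 : E)}ᶜ : Set E), f ‖x.1‖ ∂(μ.comap (↑)) := by
        rw [lintegral_subtype_comap (measurableSet_singleton _).compl (fun x ↦ f ‖x‖),
          restrict_compl_singleton]
    _ = ∫⁻ z, f z.2 ∂μ.toSphere.prod (.volumeIoiPow (finrank ℝ E - 1)) := by
        simpa using (μ.measurePreserving_homeomorphUnitSphereProd.lintegral_comp hf')
    _ = μ.toSphere univ * ∫⁻ r : Ioi (0 : ℝ), f r ∂.volumeIoiPow (finrank ℝ E - 1) := by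
        simp only [lintegral_prod _ hf'.aemeasurable, lintegral_const, mul_comm]
    _ = _ := by
        rw [Measure.volumeIoiPow, lintegral_withDensity_eq_lintegral_mul _
          (measurable_subtype_coe.pow_const _).ennreal_ofReal
          (g := fun r : Ioi (0 : ℝ) ↦ f r) (hf.comp measurable_subtype_coe)]
        exact congrArg _ (lintegral_subtype_comap measurableSet_Ioi
          (fun r ↦ ENNReal.ofReal (r ^ (finrank ℝ E - 1)) * f r))

theorem setLIntegral_norm_mem_Icc_rpow {β a b : ℝ} (ha : 0 ≤ a)
    (hint : IntegrableOn (fun r : ℝ ↦ r ^ (β + finrank ℝ E - 1)) (Ioc a b)) :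
    ∫⁻ x in {x : E | ‖x‖ ∈ Icc a b}, ENNReal.ofReal (‖x‖ ^ β) ∂μ =
      ENNReal.ofReal (μ.toSphere.real univ * ∫ r in Ioc a b, r ^ (β + finrank ℝ E - 1)) := by
  have hIoc : (Ioc a b : Set ℝ) =ᵐ[volume] (Icc a b ∩ Ioi 0 : Set ℝ) :=
    (subset_inter Ioc_subset_Icc_self fun r hr ↦ ha.trans_lt hr.1).eventuallyLE.antisymm
      (inter_subset_left.eventuallyLE.trans Ioc_ae_eq_Icc.symm.le)
  have hpow : ∀ r ∈ Ioc a b,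
      ENNReal.ofReal (r ^ (finrank ℝ E - 1)) * ENNReal.ofReal (r ^ β) =
        ENNReal.ofReal (r ^ (β + finrank ℝ E - 1)) := fun r hr ↦ by
    have hr₀ : 0 < r := ha.trans_lt hr.1
    rw [← ENNReal.ofReal_mul (by positivity), ← Real.rpow_natCast,
      Nat.cast_sub (finrank_pos (R := ℝ) (M := E)), ← Real.rpow_add hr₀]
    ring_nf
  have hs : MeasurableSet {x : E | ‖x‖ ∈ Icc a b} := measurable_norm measurableSet_Icc
  calc ∫⁻ x in {x : E | ‖x‖ ∈ Icc a b}, ENNReal.ofReal (‖x‖ ^ β) ∂μ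
      = ∫⁻ x, (Icc a b).indicator (fun r ↦ ENNReal.ofReal (r ^ β)) ‖x‖ ∂μ :=
        (lintegral_indicator hs _).symm
    _ = _ := by
      rw [lintegral_fun_norm_addHaar μ _ ((by fun_prop : Measurable fun r : ℝ ↦
          ENNReal.ofReal (r ^ β)).indicator measurableSet_Icc),
        ENNReal.ofReal_mul measureReal_nonneg, ofReal_measureReal]
      congr 1
      simp_rw [← indicator_mul_right (Icc a b)
        (fun r : ℝ ↦ ENNReal.ofReal (r ^ (finrank ℝ E - 1)))]
      rw [lintegral_indicator measurableSet_Icc, Measure.restrict_restrict measurableSet_Icc,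
        ← Measure.restrict_congr_set hIoc, setLIntegral_congr_fun measurableSet_Ioc hpow,
        ofReal_integral_eq_lintegral_ofReal hint]
      filter_upwards [ae_restrict_mem measurableSet_Ioc] with r hr
      exact Real.rpow_nonneg (ha.trans hr.1.le) _

theorem eLpNorm_norm_sub_rpow_restrict (x : E) {q β a b : ℝ} (hq : 0 < q) (ha : 0 ≤ a)
    (hint : IntegrableOn (fun r : ℝ ↦ r ^ (β * q + finrank ℝ E - 1)) (Ioc a b)) :
    eLpNorm (fun y ↦ ‖x - y‖ ^ β) (.ofReal q) (μ.restrict {y | ‖x - y‖ ∈ Icc a b}) =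
      ENNReal.ofReal ((μ.toSphere.real univ *
        ∫ r in Ioc a b, r ^ (β * q + finrank ℝ E - 1)) ^ (1 / q)) := by
  have htranslate := (μ.measurePreserving_sub_left x).setLIntegral_comp_preimage_emb
    (Homeomorph.subLeft x).measurableEmbedding (fun z ↦ ENNReal.ofReal (‖z‖ ^ (β * q)))
    {z | ‖z‖ ∈ Icc a b}
  have hI : 0 ≤ ∫ r in Ioc a b, r ^ (β * q + finrank ℝ E - 1) :=
    setIntegral_nonneg measurableSet_Ioc fun r hr ↦ Real.rpow_nonneg (ha.trans hr.1.le) _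
  rw [eLpNorm_eq_lintegral_rpow_enorm_toReal (by simpa using hq) ENNReal.ofReal_ne_top,
    ENNReal.toReal_ofReal hq.le, ← ENNReal.ofReal_rpow_of_nonneg (by positivity) (by positivity),
    ← setLIntegral_norm_mem_Icc_rpow μ ha hint]
  congr 1
  refine Eq.trans (lintegral_congr fun y ↦ ?_) htranslate
  rw [← ofReal_norm, Real.norm_of_nonneg (by positivity),
    ENNReal.ofReal_rpow_of_nonneg (by positivity) hq.le, ← Real.rpow_mul (norm_nonneg _)]

theorem eLpNorm_norm_sub_rpow_closedBall (x : E) {q r : ℝ} (hq : 0 < q) (hr : 0 ≤ r) :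
    eLpNorm (fun y ↦ ‖x - y‖ ^ (1 - finrank ℝ E / q)) (.ofReal q)
        (μ.restrict (closedBall x r)) =
      ENNReal.ofReal ((μ.toSphere.real univ / q) ^ (1 / q) * r) := by
  have hexp : (1 - finrank ℝ E / q) * q + finrank ℝ E - 1 = q - 1 := by field_simp; ring
  have hball : closedBall x r = {y | ‖x - y‖ ∈ Icc 0 r} := by
    ext y; simp [dist_eq_norm']
  have hint : IntervalIntegrable (fun t : ℝ ↦ t ^ (q - 1)) volume 0 r :=
    intervalIntegral.intervalIntegrable_rpow' (by linarith)
  rw [hball, eLpNorm_norm_sub_rpow_restrict μ x hq le_rfl (by rw [hexp]; exact hint.1),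
    hexp, ← intervalIntegral.integral_of_le hr, integral_rpow (.inl (by linarith)),
    sub_add_cancel, Real.zero_rpow hq.ne', sub_zero, mul_div_assoc', mul_div_right_comm,
    Real.mul_rpow (by positivity) (by positivity), one_div, Real.rpow_rpow_inv hr hq.ne']

theorem memLp_norm_sub_rpow_of_isBounded (x : E) {q : ℝ} (hq : 0 < q) {s : Set E}
    (hs : Bornology.IsBounded s) :
    MemLp (fun y ↦ ‖x - y‖ ^ (1 - finrank ℝ E / q)) (.ofReal q) (μ.restrict s) := by
  obtain ⟨r, hr⟩ := hs.subset_closedBall x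
  refine MemLp.mono_measure (Measure.restrict_mono (hr.trans
    (closedBall_subset_closedBall (le_max_left r 0))) le_rfl)
    ⟨((measurable_const.sub measurable_id).norm.pow_const _).aestronglyMeasurable, ?_⟩
  rw [eLpNorm_norm_sub_rpow_closedBall μ x hq (le_max_right r 0)]
  exact ENNReal.ofReal_lt_top

theorem eLpNorm_norm_sub_rpow_annulus (x : E) {q ε ρ : ℝ} (hq : 0 < q) (hε : 0 < ε)
    (hερ : ε ≤ ρ) :
    eLpNorm (fun y ↦ ‖x - y‖ ^ (-(finrank ℝ E / q))) (.ofReal q)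
        (μ.restrict {y | ‖x - y‖ ∈ Icc ε ρ}) =
      ENNReal.ofReal ((μ.toSphere.real univ * Real.log (ρ / ε)) ^ (1 / q)) := by
  have hexp : -(finrank ℝ E / q) * q + finrank ℝ E - 1 = -1 := by field_simp; ring
  have hcont : ContinuousOn (fun t : ℝ ↦ t ^ (-1 : ℝ)) (uIcc ε ρ) := fun t ht ↦
    (Real.continuousAt_rpow_const _ _ (.inl (by
      rw [uIcc_of_le hερ] at ht; exact (hε.trans_le ht.1).ne'))).continuousWithinAt
  rw [eLpNorm_norm_sub_rpow_restrict μ x hq hε.le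
      (by rw [hexp]; exact hcont.intervalIntegrable.1),
    hexp, ← intervalIntegral.integral_of_le hερ]
  simp_rw [Real.rpow_neg_one]
  rw [integral_inv_of_pos hε (hε.trans_le hερ)]

theorem eLpNorm_norm_sub_rpow_sub_le_near (x₁ x₂ : E) {q : ℝ} (hq : 1 ≤ q) :
    eLpNorm (fun y ↦ ‖x₁ - y‖ ^ (1 - finrank ℝ E / q) - ‖x₂ - y‖ ^ (1 - finrank ℝ E / q))
        (.ofReal q) (μ.restrict (closedBall x₁ (2 * ‖x₁ - x₂‖))) ≤
      ENNReal.ofReal (5 * (μ.toSphere.real univ / q) ^ (1 / q) * ‖x₁ - x₂‖) := by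
  have hq₀ : 0 < q := zero_lt_one.trans_le hq
  have hsub : closedBall x₁ (2 * ‖x₁ - x₂‖) ⊆ closedBall x₂ (3 * ‖x₁ - x₂‖) :=
    closedBall_subset_closedBall' (by rw [dist_eq_norm]; linarith)
  calc _ ≤ eLpNorm (fun y ↦ ‖x₁ - y‖ ^ (1 - finrank ℝ E / q)) (.ofReal q)
          (μ.restrict (closedBall x₁ (2 * ‖x₁ - x₂‖))) +
        eLpNorm (fun y ↦ ‖x₂ - y‖ ^ (1 - finrank ℝ E / q)) (.ofReal q)
          (μ.restrict (closedBall x₂ (3 * ‖x₁ - x₂‖))) :=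
        (eLpNorm_sub_le (f := fun y ↦ ‖x₁ - y‖ ^ (1 - finrank ℝ E / q))
          (g := fun y ↦ ‖x₂ - y‖ ^ (1 - finrank ℝ E / q))
          ((measurable_const.sub measurable_id).norm.pow_const _).aestronglyMeasurable
          ((measurable_const.sub measurable_id).norm.pow_const _).aestronglyMeasurable
          (by simpa using hq)).trans
          (add_le_add le_rfl (eLpNorm_mono_measure _ (Measure.restrict_mono hsub le_rfl)))
    _ = _ := by
        rw [eLpNorm_norm_sub_rpow_closedBall μ x₁ hq₀ (by positivity),
          eLpNorm_norm_sub_rpow_closedBall μ x₂ hq₀ (by positivity),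
          ← ENNReal.ofReal_add (by positivity) (by positivity)]
        exact congrArg ENNReal.ofReal (by ring)

theorem eLpNorm_norm_sub_rpow_sub_le_far {x₁ x₂ : E} (hx : x₁ ≠ x₂) {q ρ : ℝ} (hq : 1 ≤ q)
    (hρ : 2 * ‖x₁ - x₂‖ ≤ ρ) :
    eLpNorm (fun y ↦ ‖x₁ - y‖ ^ (1 - finrank ℝ E / q) - ‖x₂ - y‖ ^ (1 - finrank ℝ E / q))
        (.ofReal q) (μ.restrict {y | ‖x₁ - y‖ ∈ Icc (2 * ‖x₁ - x₂‖) ρ}) ≤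
      ENNReal.ofReal (|1 - finrank ℝ E / q| * 2 ^ (finrank ℝ E / q) * ‖x₁ - x₂‖ *
        (μ.toSphere.real univ * Real.log (ρ / (2 * ‖x₁ - x₂‖))) ^ (1 / q)) := by
  have hq₀ : 0 < q := zero_lt_one.trans_le hq
  have hh : 0 < 2 * ‖x₁ - x₂‖ := mul_pos two_pos (norm_pos_iff.2 (sub_ne_zero.2 hx))
  have hpt : ∀ᵐ y ∂μ.restrict {y | ‖x₁ - y‖ ∈ Icc (2 * ‖x₁ - x₂‖) ρ},
      ‖‖x₁ - y‖ ^ (1 - finrank ℝ E / q) - ‖x₂ - y‖ ^ (1 - finrank ℝ E / q)‖ ≤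
        ((|1 - finrank ℝ E / q| * 2 ^ (finrank ℝ E / q) * ‖x₁ - x₂‖) •
          fun y ↦ ‖x₁ - y‖ ^ (-(finrank ℝ E / q))) y := by
    filter_upwards [ae_restrict_mem (measurable_norm.comp (measurable_const.sub measurable_id)
      measurableSet_Icc)] with y hy
    have := abs_norm_sub_rpow_sub_le (a := 1 - finrank ℝ E / q)
      (by linarith [(by positivity : 0 ≤ (finrank ℝ E : ℝ) / q)]) hy.1 hx
    rwa [sub_sub_cancel, sub_sub_cancel_left] at this
  grw [eLpNorm_mono_ae_real hpt, eLpNorm_const_smul,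
    eLpNorm_norm_sub_rpow_annulus μ x₁ hq₀ hh hρ, ← ofReal_norm,
    Real.norm_of_nonneg (by positivity), ← ENNReal.ofReal_mul (by positivity)]

theorem exists_eLpNorm_norm_sub_rpow_sub_le_mul_log {M q : ℝ} (hM : 1 ≤ M) (hq : 1 ≤ q) :
    ∃ C : ℝ, 0 ≤ C ∧ ∀ x₁ ∈ closedBall (0 : E) M, ∀ x₂ ∈ closedBall (0 : E) M,
      ‖x₁ - x₂‖ ≤ 1 / 2 →
      eLpNorm (fun y ↦ ‖x₁ - y‖ ^ (1 - finrank ℝ E / q) - ‖x₂ - y‖ ^ (1 - finrank ℝ E / q))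
          (.ofReal q) (μ.restrict (closedBall 0 M)) ≤
        ENNReal.ofReal (C * ‖x₁ - x₂‖ * Real.log ‖x₁ - x₂‖⁻¹) := by
  set σ := μ.toSphere.real univ
  set c₁ := 5 * (σ / q) ^ (1 / q)
  set c₂ := |1 - finrank ℝ E / q| * 2 ^ (finrank ℝ E / q)
  have hσ : 0 ≤ σ := measureReal_nonneg
  have hlog2 : 0 < Real.log 2 := Real.log_pos one_lt_two
  have hlogM : 0 ≤ Real.log M := Real.log_nonneg hM
  refine ⟨(c₁ + c₂ * (1 + σ)) * ((1 + Real.log M) / Real.log 2 + 1), by positivity,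
    fun x₁ hx₁ x₂ hx₂ hh ↦ ?_⟩
  rcases eq_or_ne x₁ x₂ with rfl | hx
  · simp
  have hh₀ : 0 < ‖x₁ - x₂‖ := norm_pos_iff.2 (sub_ne_zero.2 hx)
  have h2M : 2 * ‖x₁ - x₂‖ ≤ 2 * M := by linarith
  have hlog : 0 ≤ Real.log (M / ‖x₁ - x₂‖) :=
    Real.log_nonneg (by rw [le_div_iff₀ hh₀]; linarith)
  grw [Measure.restrict_mono (closedBall_subset_closedBall_union_annulus hx₁ _) le_rfl,
    eLpNorm_restrict_union_le _ (by simpa using hq) ENNReal.ofReal_ne_top,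
    eLpNorm_norm_sub_rpow_sub_le_near μ x₁ x₂ hq, eLpNorm_norm_sub_rpow_sub_le_far μ hx hq h2M,
    mul_div_mul_left _ _ two_ne_zero, ← ENNReal.ofReal_add (by positivity)
      (mul_nonneg (by positivity) (Real.rpow_nonneg (mul_nonneg hσ hlog) _))]
  exact ENNReal.ofReal_le_ofReal
    (add_mul_rpow_log_div_le_mul_log_inv (by positivity) (by positivity) hσ hq hM hh₀ hh)

theorem exists_abs_integral_norm_sub_rpow_mul_sub_le_mul_log {M q : ℝ} {p : ℝ≥0∞}
    [p.HolderConjugate (.ofReal q)] (hM : 1 ≤ M) {g : E → ℝ} (hg : MemLp g p μ)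
    (hgs : Function.support g ⊆ closedBall 0 M) :
    ∃ C : ℝ, ∀ x₁ ∈ closedBall (0 : E) M, ∀ x₂ ∈ closedBall (0 : E) M, ‖x₁ - x₂‖ ≤ 1 / 2 →
      |∫ y, ‖x₁ - y‖ ^ (1 - finrank ℝ E / q) * g y ∂μ -
          ∫ y, ‖x₂ - y‖ ^ (1 - finrank ℝ E / q) * g y ∂μ| ≤
        C * ‖x₁ - x₂‖ * Real.log ‖x₁ - x₂‖⁻¹ := by
  have hq : 1 ≤ q := ENNReal.one_le_ofReal.1 (ENNReal.HolderConjugate.one_le _ p)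
  have hq₀ : 0 < q := by linarith
  obtain ⟨C, hC₀, hC⟩ := exists_eLpNorm_norm_sub_rpow_sub_le_mul_log μ hM hq
  refine ⟨C * (eLpNorm g p μ).toReal, fun x₁ hx₁ x₂ hx₂ hh ↦ ?_⟩
  have hlog : 0 ≤ Real.log ‖x₁ - x₂‖⁻¹ := by
    rw [Real.log_inv, neg_nonneg]
    exact Real.log_nonpos (norm_nonneg _) (by linarith)
  have key := enorm_integral_mul_sub_integral_mul_le
    (memLp_norm_sub_rpow_of_isBounded μ x₁ hq₀ isBounded_closedBall)
    (memLp_norm_sub_rpow_of_isBounded μ x₂ hq₀ isBounded_closedBall) hg hgs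
  simp only [Pi.sub_def] at key
  grw [hC x₁ hx₁ x₂ hx₂ hh] at key
  rw [← ENNReal.ofReal_toReal hg.eLpNorm_ne_top, ← ENNReal.ofReal_mul (by positivity),
    Real.enorm_eq_ofReal_abs, ENNReal.ofReal_le_ofReal_iff (by positivity)] at key
  exact key.trans_eq (by ring)

end HaarMeasure

theorem riesz_potential_almost_lipschitz_general (N : ℕ) (hN : 1 ≤ N) (s : ℝ)
    (p : ℝ≥0∞) (hp : 1 < p)
    (hend : 2 * s - (N : ℝ) * (1 / p).toReal = 1)
    (c : EuclideanSpace ℝ (Fin N)) (R : ℝ)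
    (g : EuclideanSpace ℝ (Fin N) → ℝ)
    (hsupp : Function.support g ⊆ Metric.ball c R)
    (hg : MemLp g p) :
    ∀ K : Set (EuclideanSpace ℝ (Fin N)), Bornology.IsBounded K →
      ∃ C : ℝ, ∀ x₁ ∈ K, ∀ x₂ ∈ K, ‖x₁ - x₂‖ ≤ 1 / 2 →
        |(∫ y : EuclideanSpace ℝ (Fin N), rieszKernel N s (x₁ - y) * g y) -
            (∫ y : EuclideanSpace ℝ (Fin N), rieszKernel N s (x₂ - y) * g y)|
          ≤ C * ‖x₁ - x₂‖ * Real.log (‖x₁ - x₂‖⁻¹) := by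
  intro K hK
  have : NeZero N := ⟨by omega⟩
  obtain ⟨q, hpq, hpq_sum⟩ := exists_holderConjugate_ofReal hp
  have hexp : 2 * s - N = 1 - finrank ℝ (EuclideanSpace ℝ (Fin N)) / q := by
    rw [eq_sub_of_add_eq hpq_sum, mul_sub, mul_one, mul_one_div] at hend
    rw [finrank_euclideanSpace_fin]
    linarith
  obtain ⟨M, hM⟩ := (hK.union isBounded_ball).subset_closedBall (0 : EuclideanSpace ℝ (Fin N))
  replace hM := hM.trans (closedBall_subset_closedBall (le_max_left M 1))
  obtain ⟨C, hC⟩ := exists_abs_integral_norm_sub_rpow_mul_sub_le_mul_log volume (q := q)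
    (le_max_right M 1) hg (hsupp.trans (subset_union_right.trans hM))
  obtain ⟨D, hD⟩ : ∃ D, ∀ x, rieszKernel N s x = D * ‖x‖ ^ (2 * s - N) := ⟨_, fun _ ↦ rfl⟩
  refine ⟨|D| * C, fun x₁ hx₁ x₂ hx₂ hh ↦ ?_⟩
  simpa only [hD, hexp, mul_assoc, integral_const_mul, ← mul_sub, abs_mul] using
    mul_le_mul_of_nonneg_left (hC x₁ (hM (.inl hx₁)) x₂ (hM (.inl hx₂)) hh) (abs_nonneg D)

/-- Endpoint case `2s − N/p = 1`: the Riesz potential `ψ_H = k_{2s} * g` of `g ∈ L^p`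
supported in a ball is almost Lipschitz, with a logarithmic correction factor, on any
fixed bounded set. -/
theorem riesz_potential_almost_lipschitz (N : ℕ) (hN : 1 ≤ N) (s : ℝ) (hs : 0 < s)
    (hsN : 2 * s < (N : ℝ)) (p : ℝ≥0∞) (hp : 1 < p)
    (hend : 2 * s - (N : ℝ) * (1 / p).toReal = 1)
    (c : EuclideanSpace ℝ (Fin N)) (R : ℝ) (hR : 0 < R)
    (g : EuclideanSpace ℝ (Fin N) → ℝ)
    (hsupp : Function.support g ⊆ Metric.ball c R)
    (hg : MemLp g p) :
    ∀ K : Set (EuclideanSpace ℝ (Fin N)), Bornology.IsBounded K →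
      ∃ C : ℝ, ∀ x₁ ∈ K, ∀ x₂ ∈ K, ‖x₁ - x₂‖ ≤ 1 / 2 →
        |(∫ y : EuclideanSpace ℝ (Fin N), rieszKernel N s (x₁ - y) * g y) -
            (∫ y : EuclideanSpace ℝ (Fin N), rieszKernel N s (x₂ - y) * g y)|
          ≤ C * ‖x₁ - x₂‖ * Real.log (‖x₁ - x₂‖⁻¹) :=
  riesz_potential_almost_lipschitz_general N hN s p hp hend c R g hsupp hg
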